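/- Let x₀, y₀ ∈ ℝ, let g : [x₀,∞) × [y₀,∞) → ℝ and K : [x₀,∞) × [y₀,∞) × [x₀,∞) × [y₀,∞) × ℝ → ℝ be continuous, and let p, q, r : [x₀,∞) × [y₀,∞) → [0,∞) be continuous such that (i) |K(x,y,η,τ,u) − K(x,y,η,τ,v)| ≤ q(x,y) r(η,τ) |u − v| for all arguments and all u, v ∈ ℝ, and (ii) |g(x,y) + ∫_{x₀}^{x} ∫_{x₀}^{s} ∫_{y₀}^{y} K(x,y,η,τ,0) dτ dη ds| ≤ p(x,y) for all x ≥ x₀ and y ≥ y₀. If a continuous function u : [x₀,∞) × [y₀,∞) → ℝ satisfies u(x,y) = g(x,y) + ∫_{x₀}^{x} ∫_{x₀}^{s} ∫_{y₀}^{y} K(x,y,η,τ,u(η,τ)) dτ dη ds for all x ≥ x₀ and y ≥ y₀, then |u(x,y)| ≤ p(x,y) + q(x,y) · ( ∫_{x₀}^{x} ∫_{x₀}^{s} ∫_{y₀}^{y} r(η,τ) p(η,τ) dτ dη ds ) · exp( ∫_{x₀}^{x} ∫_{x₀}^{s} ∫_{y₀}^{y} r(η,τ) q(η,τ) dτ dη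 ds ) for all x ≥ x₀ and y ≥ y₀. -/

import Mathlib

/-!
Fix `(X, Y)` and let `z x` be the triple integral of `r |u|` up to `(x, Y)`. The Lipschitz bound
turns the integral equation into `|u| ≤ p + q z`; since the triple integral grows with its upper
limits, integrating in `τ` gives `z x ≤ A + ∫_{x₀}^x ∫_{x₀}^s b z` for `x ≤ X`, where `A` is the
triple integral of `r p` up to `(X, Y)` and `b η = ∫_{y₀}^Y r q`. Then `v = A + ∫∫ b z` satisfies
`v' = ∫ b z ≤ (∫ b) v`, so `v e^{-B}` decreases, where `B = ∫∫ b`, and `z ≤ v ≤ A e^{B}`.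

The data are continuous only on the quadrant `[x₀, ∞) × [y₀, ∞)`; clamping their arguments to it
extends them continuously to the plane without changing any of the integrals.
-/

open intervalIntegral Set Function

noncomputable def secondPrimitive (a : ℝ) (f : ℝ → ℝ) (x : ℝ) : ℝ :=
  ∫ s in a..x, ∫ t in a..s, f t

section SecondPrimitive

variable {a x : ℝ} {f g : ℝ → ℝ}

theorem secondPrimitive_self (a : ℝ) (f : ℝ → ℝ) : secondPrimitive a f a = 0 :=
  integral_same

theorem hasDerivAt_secondPrimitive (hf : Continuous f) (x : ℝ) :
    HasDerivAt (secondPrimitive a f) (∫ t in a..x, f t) x :=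
  ((continuous_primitive hf.intervalIntegrable a).integral_hasStrictDerivAt a x).hasDerivAt

theorem continuous_secondPrimitive (hf : Continuous f) : Continuous (secondPrimitive a f) :=
  continuous_iff_continuousAt.2 fun x => (hasDerivAt_secondPrimitive hf x).continuousAt

theorem secondPrimitive_congr (hx : a ≤ x) (h : EqOn f g (Icc a x)) :
    secondPrimitive a f x = secondPrimitive a g x := by
  refine integral_congr fun s hs => integral_congr fun t ht => h ?_
  rw [uIcc_of_le hx] at hs
  rw [uIcc_of_le hs.1] at ht
  exact ⟨ht.1, ht.2.trans hs.2⟩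

theorem secondPrimitive_mono (hf : Continuous f) (hg : Continuous g) (hx : a ≤ x)
    (h : ∀ t ∈ Icc a x, f t ≤ g t) : secondPrimitive a f x ≤ secondPrimitive a g x :=
  integral_mono_on hx ((continuous_primitive hf.intervalIntegrable a).intervalIntegrable _ _)
    ((continuous_primitive hg.intervalIntegrable a).intervalIntegrable _ _) fun _ hs =>
      integral_mono_on hs.1 (hf.intervalIntegrable _ _) (hg.intervalIntegrable _ _)
        fun t ht => h t ⟨ht.1, ht.2.trans hs.2⟩

theorem secondPrimitive_add (hf : Continuous f) (hg : Continuous g) :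
    secondPrimitive a (fun t => f t + g t) x =
      secondPrimitive a f x + secondPrimitive a g x := by
  rw [secondPrimitive, secondPrimitive, secondPrimitive, ← integral_add
    ((continuous_primitive hf.intervalIntegrable a).intervalIntegrable _ _)
    ((continuous_primitive hg.intervalIntegrable a).intervalIntegrable _ _)]
  exact integral_congr fun _ _ =>
    integral_add (hf.intervalIntegrable _ _) (hg.intervalIntegrable _ _)

theorem secondPrimitive_sub (hf : Continuous f) (hg : Continuous g) :
    secondPrimitive a (fun t => f t - g t) x =
      secondPrimitive a f x - secondPrimitive a g x := by
  rw [secondPrimitive, secondPrimitive, secondPrimitive, ← integral_sub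
    ((continuous_primitive hf.intervalIntegrable a).intervalIntegrable _ _)
    ((continuous_primitive hg.intervalIntegrable a).intervalIntegrable _ _)]
  exact integral_congr fun _ _ =>
    integral_sub (hf.intervalIntegrable _ _) (hg.intervalIntegrable _ _)

theorem secondPrimitive_const_mul (c : ℝ) (f : ℝ → ℝ) :
    secondPrimitive a (fun t => c * f t) x = c * secondPrimitive a f x := by
  simp only [secondPrimitive, integral_const_mul]

theorem abs_secondPrimitive_le (hf : Continuous f) (hx : a ≤ x) :
    |secondPrimitive a f x| ≤ secondPrimitive a (fun t => |f t|) x :=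
  (abs_integral_le_integral_abs hx).trans <| integral_mono_on hx
    ((continuous_primitive hf.intervalIntegrable a).abs.intervalIntegrable _ _)
    ((continuous_primitive hf.abs.intervalIntegrable a).intervalIntegrable _ _)
    fun _ hs => abs_integral_le_integral_abs hs.1

theorem monotoneOn_secondPrimitive {b : ℝ} (hf : Continuous f) (h : ∀ t ∈ Icc a b, 0 ≤ f t) :
    MonotoneOn (secondPrimitive a f) (Icc a b) := by
  refine monotoneOn_of_hasDerivWithinAt_nonneg (convex_Icc a b)
    (continuous_secondPrimitive hf).continuousOn
    (fun x _ => (hasDerivAt_secondPrimitive hf x).hasDerivWithinAt) fun x hx => ?_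
  rw [interior_Icc] at hx
  exact integral_nonneg hx.1.le fun t ht => h t ⟨ht.1, ht.2.trans hx.2.le⟩

theorem le_mul_exp_of_le_add_secondPrimitive {b z : ℝ → ℝ} {c X : ℝ} (hb : Continuous b)
    (hz : Continuous z) (hX : a ≤ X) (hb₀ : ∀ t ∈ Icc a X, 0 ≤ b t)
    (hz₀ : ∀ t ∈ Icc a X, 0 ≤ z t)
    (h : ∀ x ∈ Icc a X, z x ≤ c + secondPrimitive a (fun t => b t * z t) x) :
    z X ≤ c * Real.exp (secondPrimitive a b X) := by
  set v := fun x => c + secondPrimitive a (fun t => b t * z t) x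
  set B := secondPrimitive a b
  have hbz : Continuous fun t => b t * z t := hb.mul hz
  have hv : ∀ x, HasDerivAt v (∫ t in a..x, b t * z t) x := fun x =>
    (hasDerivAt_secondPrimitive hbz x).const_add c
  have hB : ∀ x, HasDerivAt B (∫ t in a..x, b t) x := hasDerivAt_secondPrimitive hb
  have hv_mono : MonotoneOn v (Icc a X) := fun s hs t ht hst =>
    add_le_add_right (monotoneOn_secondPrimitive hbz
      (fun t ht => mul_nonneg (hb₀ t ht) (hz₀ t ht)) hs ht hst) c
  -- `v * exp (-B)` is nonincreasing because `v' = ∫ b z ≤ (∫ b) v = B' v`.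
  have hφ : AntitoneOn (fun x => v x * Real.exp (-B x)) (Icc a X) := by
    refine antitoneOn_of_hasDerivWithinAt_nonpos (convex_Icc a X)
      (f' := fun x => ((∫ t in a..x, b t * z t) - (∫ t in a..x, b t) * v x) * Real.exp (-B x))
      (Continuous.continuousOn ?_) (fun x _ => ?_) fun x hx => ?_
    · exact continuous_iff_continuousAt.2 fun x => ((hv x).mul (hB x).neg.exp).continuousAt
    · exact ((hv x).mul (hB x).neg.exp).hasDerivWithinAt.congr_deriv
        (by rw [Pi.neg_apply]; ring)
    rw [interior_Icc] at hx
    have hx' : x ∈ Icc a X := Ioo_subset_Icc_self hx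
    refine mul_nonpos_of_nonpos_of_nonneg (sub_nonpos.2 ?_) (Real.exp_pos _).le
    rw [← integral_mul_const]
    refine integral_mono_on hx.1.le (hbz.intervalIntegrable _ _)
      ((hb.mul continuous_const).intervalIntegrable _ _) fun t ht => ?_
    have ht' : t ∈ Icc a X := ⟨ht.1, ht.2.trans hx'.2⟩
    exact mul_le_mul_of_nonneg_left ((h t ht').trans (hv_mono ht' hx' ht.2)) (hb₀ t ht')
  have hφX := hφ ⟨le_rfl, hX⟩ ⟨hX, le_rfl⟩ hX
  simp only [v, B, secondPrimitive_self, neg_zero, Real.exp_zero, add_zero, mul_one] at hφX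
  calc z X ≤ v X := h X ⟨hX, le_rfl⟩
    _ = v X * Real.exp (-B X) * Real.exp (B X) := by
      rw [mul_assoc, ← Real.exp_add, neg_add_cancel, Real.exp_zero, mul_one]
    _ ≤ c * Real.exp (B X) := mul_le_mul_of_nonneg_right hφX (Real.exp_pos _).le

end SecondPrimitive

theorem integral_mul_le_add_mul_integral {R U P Q : ℝ → ℝ} {a b c : ℝ} (hab : a ≤ b)
    (hRU : IntervalIntegrable (fun t => R t * U t) MeasureTheory.volume a b)
    (hRP : IntervalIntegrable (fun t => R t * P t) MeasureTheory.volume a b)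
    (hRQ : IntervalIntegrable (fun t => R t * Q t) MeasureTheory.volume a b)
    (hR₀ : ∀ t ∈ Icc a b, 0 ≤ R t) (h : ∀ t ∈ Icc a b, U t ≤ P t + Q t * c) :
    ∫ t in a..b, R t * U t ≤ (∫ t in a..b, R t * P t) + (∫ t in a..b, R t * Q t) * c := by
  rw [← integral_mul_const, ← integral_add hRP (hRQ.mul_const c)]
  refine integral_mono_on hab hRU (hRP.add (hRQ.mul_const c)) fun t ht => ?_
  calc R t * U t ≤ R t * (P t + Q t * c) := mul_le_mul_of_nonneg_left (h t ht) (hR₀ t ht)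
    _ = R t * P t + R t * Q t * c := by ring

noncomputable def tripleIntegral (x₀ y₀ : ℝ) (f : ℝ → ℝ → ℝ) (x y : ℝ) : ℝ :=
  secondPrimitive x₀ (fun η => ∫ τ in y₀..y, f η τ) x

section TripleIntegral

variable {x₀ y₀ x y : ℝ} {f g : ℝ → ℝ → ℝ}

theorem intervalIntegrable_of_continuous_uncurry (hf : Continuous (uncurry f)) (η a b : ℝ) :
    IntervalIntegrable (f η) MeasureTheory.volume a b :=
  (hf.comp (Continuous.prodMk_right η)).intervalIntegrable a b

theorem tripleIntegral_congr (hx : x₀ ≤ x) (hy : y₀ ≤ y)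
    (h : ∀ η ∈ Icc x₀ x, ∀ τ ∈ Icc y₀ y, f η τ = g η τ) :
    tripleIntegral x₀ y₀ f x y = tripleIntegral x₀ y₀ g x y :=
  secondPrimitive_congr hx fun η hη =>
    integral_congr fun τ hτ => h η hη τ (by rwa [uIcc_of_le hy] at hτ)

theorem tripleIntegral_nonneg (hx : x₀ ≤ x) (hy : y₀ ≤ y)
    (h : ∀ η ∈ Icc x₀ x, ∀ τ ∈ Icc y₀ y, 0 ≤ f η τ) : 0 ≤ tripleIntegral x₀ y₀ f x y :=
  integral_nonneg hx fun _ hs => integral_nonneg hs.1 fun η hη =>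
    integral_nonneg hy fun τ hτ => h η ⟨hη.1, hη.2.trans hs.2⟩ τ hτ

theorem tripleIntegral_mono (hf : Continuous (uncurry f)) (hg : Continuous (uncurry g))
    (hx : x₀ ≤ x) (hy : y₀ ≤ y) (h : ∀ η ∈ Icc x₀ x, ∀ τ ∈ Icc y₀ y, f η τ ≤ g η τ) :
    tripleIntegral x₀ y₀ f x y ≤ tripleIntegral x₀ y₀ g x y :=
  secondPrimitive_mono (continuous_parametric_intervalIntegral_of_continuous' hf _ _)
    (continuous_parametric_intervalIntegral_of_continuous' hg _ _) hx fun η hη =>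
      integral_mono_on hy (intervalIntegrable_of_continuous_uncurry hf η _ _)
        (intervalIntegrable_of_continuous_uncurry hg η _ _) (h η hη)

theorem tripleIntegral_mono_right {y' : ℝ} (hf : Continuous (uncurry f)) (hx : x₀ ≤ x)
    (hy : y₀ ≤ y) (hyy' : y ≤ y') (h : ∀ η ∈ Icc x₀ x, ∀ τ ∈ Icc y₀ y', 0 ≤ f η τ) :
    tripleIntegral x₀ y₀ f x y ≤ tripleIntegral x₀ y₀ f x y' :=
  secondPrimitive_mono (continuous_parametric_intervalIntegral_of_continuous' hf _ _)
    (continuous_parametric_intervalIntegral_of_continuous' hf _ _) hx fun η hη =>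
      integral_mono_interval le_rfl hy hyy'
        ((MeasureTheory.ae_restrict_mem measurableSet_Ioc).mono fun τ hτ =>
          h η hη τ (Ioc_subset_Icc_self hτ))
        (intervalIntegrable_of_continuous_uncurry hf η _ _)

theorem tripleIntegral_sub (hf : Continuous (uncurry f)) (hg : Continuous (uncurry g)) :
    tripleIntegral x₀ y₀ (fun η τ => f η τ - g η τ) x y =
      tripleIntegral x₀ y₀ f x y - tripleIntegral x₀ y₀ g x y := by
  rw [tripleIntegral, tripleIntegral, tripleIntegral, ← secondPrimitive_sub
    (continuous_parametric_intervalIntegral_of_continuous' hf _ _)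
    (continuous_parametric_intervalIntegral_of_continuous' hg _ _)]
  exact congrArg (secondPrimitive x₀ · x) <| funext fun η =>
    integral_sub (intervalIntegrable_of_continuous_uncurry hf η _ _)
      (intervalIntegrable_of_continuous_uncurry hg η _ _)

theorem tripleIntegral_const_mul (c : ℝ) (f : ℝ → ℝ → ℝ) :
    tripleIntegral x₀ y₀ (fun η τ => c * f η τ) x y = c * tripleIntegral x₀ y₀ f x y := by
  simp only [tripleIntegral, integral_const_mul, secondPrimitive_const_mul]

theorem abs_tripleIntegral_le (hf : Continuous (uncurry f)) (hx : x₀ ≤ x) (hy : y₀ ≤ y) :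
    |tripleIntegral x₀ y₀ f x y| ≤ tripleIntegral x₀ y₀ (fun η τ => |f η τ|) x y := by
  have hF : Continuous fun η => ∫ τ in y₀..y, f η τ :=
    continuous_parametric_intervalIntegral_of_continuous' hf y₀ y
  exact (abs_secondPrimitive_le hF hx).trans <| secondPrimitive_mono hF.abs
    (continuous_parametric_intervalIntegral_of_continuous' (f := fun η τ => |f η τ|) hf.abs _ _)
    hx fun _ _ => abs_integral_le_integral_abs hy

end TripleIntegral

noncomputable def quadrantExtend (x₀ y₀ : ℝ) (f : ℝ → ℝ → ℝ) (x y : ℝ) : ℝ :=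
  f (max x x₀) (max y y₀)

section QuadrantExtend

variable {x₀ y₀ x y : ℝ} {f g k : ℝ → ℝ → ℝ}

theorem quadrantExtend_of_le (hx : x₀ ≤ x) (hy : y₀ ≤ y) :
    quadrantExtend x₀ y₀ f x y = f x y := by
  rw [quadrantExtend, max_eq_left hx, max_eq_left hy]

theorem continuous_quadrantExtend (hf : ContinuousOn (uncurry f) (Ici x₀ ×ˢ Ici y₀)) :
    Continuous (uncurry (quadrantExtend x₀ y₀ f)) :=
  hf.comp_continuous ((continuous_fst.max continuous_const).prodMk
    (continuous_snd.max continuous_const)) fun _ =>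
      ⟨mem_Ici.2 (le_max_right _ _), mem_Ici.2 (le_max_right _ _)⟩

theorem tripleIntegral_quadrantExtend (hx : x₀ ≤ x) (hy : y₀ ≤ y) :
    tripleIntegral x₀ y₀ (quadrantExtend x₀ y₀ f) x y = tripleIntegral x₀ y₀ f x y :=
  tripleIntegral_congr hx hy fun _ hη _ hτ => quadrantExtend_of_le hη.1 hτ.1

theorem abs_tripleIntegral_sub_le (hf : ContinuousOn (uncurry f) (Ici x₀ ×ˢ Ici y₀))
    (hg : ContinuousOn (uncurry g) (Ici x₀ ×ˢ Ici y₀))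
    (hk : ContinuousOn (uncurry k) (Ici x₀ ×ˢ Ici y₀)) (hx : x₀ ≤ x) (hy : y₀ ≤ y)
    (h : ∀ η τ, x₀ ≤ η → y₀ ≤ τ → |f η τ - g η τ| ≤ k η τ) :
    |tripleIntegral x₀ y₀ f x y - tripleIntegral x₀ y₀ g x y| ≤ tripleIntegral x₀ y₀ k x y := by
  have hfg : Continuous (uncurry fun η τ =>
      quadrantExtend x₀ y₀ f η τ - quadrantExtend x₀ y₀ g η τ) :=
    (continuous_quadrantExtend hf).sub (continuous_quadrantExtend hg)
  rw [← tripleIntegral_quadrantExtend (f := f) hx hy,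
    ← tripleIntegral_quadrantExtend (f := g) hx hy, ← tripleIntegral_quadrantExtend (f := k) hx hy,
    ← tripleIntegral_sub (continuous_quadrantExtend hf) (continuous_quadrantExtend hg)]
  refine (abs_tripleIntegral_le hfg hx hy).trans <|
    tripleIntegral_mono (f := fun η τ => |_ - _|) hfg.abs (continuous_quadrantExtend hk)
      hx hy fun η _ τ _ => h _ _ (le_max_right η x₀) (le_max_right τ y₀)

end QuadrantExtend

theorem tripleIntegral_le_mul_exp_of_continuous {x₀ y₀ X Y : ℝ} {P Q R U : ℝ → ℝ → ℝ}
    (hP : Continuous (uncurry P)) (hQ : Continuous (uncurry Q)) (hR : Continuous (uncurry R))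
    (hU : Continuous (uncurry U)) (hP₀ : ∀ x y, x₀ ≤ x → y₀ ≤ y → 0 ≤ P x y)
    (hQ₀ : ∀ x y, x₀ ≤ x → y₀ ≤ y → 0 ≤ Q x y) (hR₀ : ∀ x y, x₀ ≤ x → y₀ ≤ y → 0 ≤ R x y)
    (hU₀ : ∀ x y, x₀ ≤ x → y₀ ≤ y → 0 ≤ U x y)
    (h : ∀ x y, x₀ ≤ x → y₀ ≤ y →
      U x y ≤ P x y + Q x y * tripleIntegral x₀ y₀ (fun η τ => R η τ * U η τ) x y)
    (hX : x₀ ≤ X) (hY : y₀ ≤ Y) :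
    tripleIntegral x₀ y₀ (fun η τ => R η τ * U η τ) X Y ≤
      tripleIntegral x₀ y₀ (fun η τ => R η τ * P η τ) X Y *
        Real.exp (tripleIntegral x₀ y₀ (fun η τ => R η τ * Q η τ) X Y) := by
  set a := fun η => ∫ τ in y₀..Y, R η τ * P η τ
  set b := fun η => ∫ τ in y₀..Y, R η τ * Q η τ
  set z := fun x => tripleIntegral x₀ y₀ (fun η τ => R η τ * U η τ) x Y
  have hRP : Continuous (uncurry fun η τ => R η τ * P η τ) := hR.mul hP
  have hRQ : Continuous (uncurry fun η τ => R η τ * Q η τ) := hR.mul hQ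
  have hRU : Continuous (uncurry fun η τ => R η τ * U η τ) := hR.mul hU
  have ha : Continuous a := continuous_parametric_intervalIntegral_of_continuous' hRP _ _
  have hb : Continuous b := continuous_parametric_intervalIntegral_of_continuous' hRQ _ _
  have hRU' : Continuous fun η => ∫ τ in y₀..Y, R η τ * U η τ :=
    continuous_parametric_intervalIntegral_of_continuous' hRU _ _
  have hz : Continuous z := continuous_secondPrimitive hRU'
  have hRU₀ : ∀ η τ, x₀ ≤ η → y₀ ≤ τ → 0 ≤ R η τ * U η τ := fun η τ hη hτ =>
    mul_nonneg (hR₀ η τ hη hτ) (hU₀ η τ hη hτ)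
  -- For `τ ≤ Y` the triple integral up to `(η, τ)` is at most `z η`.
  have hinner : ∀ η, x₀ ≤ η → ∫ τ in y₀..Y, R η τ * U η τ ≤ a η + b η * z η := fun η hη =>
    integral_mul_le_add_mul_integral hY (intervalIntegrable_of_continuous_uncurry hRU η _ _)
      (intervalIntegrable_of_continuous_uncurry hRP η _ _)
      (intervalIntegrable_of_continuous_uncurry hRQ η _ _) (fun τ hτ => hR₀ η τ hη hτ.1)
      fun τ hτ => (h η τ hη hτ.1).trans <| add_le_add le_rfl <| mul_le_mul_of_nonneg_left
        (tripleIntegral_mono_right hRU hη hτ.1 hτ.2 fun η' hη' τ' hτ' => hRU₀ η' τ' hη'.1 hτ'.1)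
        (hQ₀ η τ hη hτ.1)
  refine le_mul_exp_of_le_add_secondPrimitive hb hz hX
    (fun η hη => integral_nonneg hY fun τ hτ => mul_nonneg (hR₀ η τ hη.1 hτ.1) (hQ₀ η τ hη.1 hτ.1))
    (fun x hx => tripleIntegral_nonneg hx.1 hY fun η hη τ hτ => hRU₀ η τ hη.1 hτ.1) fun x hx => ?_
  calc z x ≤ secondPrimitive x₀ (fun η => a η + b η * z η) x :=
        secondPrimitive_mono hRU' (ha.add (hb.mul hz)) hx.1 fun η hη => hinner η hη.1
    _ = secondPrimitive x₀ a x + secondPrimitive x₀ (fun η => b η * z η) x :=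
        secondPrimitive_add ha (hb.mul hz)
    _ ≤ secondPrimitive x₀ a X + secondPrimitive x₀ (fun η => b η * z η) x := by
        gcongr
        exact monotoneOn_secondPrimitive ha (fun η hη => integral_nonneg hY fun τ hτ =>
          mul_nonneg (hR₀ η τ hη.1 hτ.1) (hP₀ η τ hη.1 hτ.1)) hx ⟨hX, le_rfl⟩ hx.2

theorem tripleIntegral_le_mul_exp {x₀ y₀ X Y : ℝ} {P Q R U : ℝ → ℝ → ℝ}
    (hP : ContinuousOn (uncurry P) (Ici x₀ ×ˢ Ici y₀))
    (hQ : ContinuousOn (uncurry Q) (Ici x₀ ×ˢ Ici y₀))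
    (hR : ContinuousOn (uncurry R) (Ici x₀ ×ˢ Ici y₀))
    (hU : ContinuousOn (uncurry U) (Ici x₀ ×ˢ Ici y₀))
    (hP₀ : ∀ x y, x₀ ≤ x → y₀ ≤ y → 0 ≤ P x y)
    (hQ₀ : ∀ x y, x₀ ≤ x → y₀ ≤ y → 0 ≤ Q x y) (hR₀ : ∀ x y, x₀ ≤ x → y₀ ≤ y → 0 ≤ R x y)
    (hU₀ : ∀ x y, x₀ ≤ x → y₀ ≤ y → 0 ≤ U x y)
    (h : ∀ x y, x₀ ≤ x → y₀ ≤ y →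
      U x y ≤ P x y + Q x y * tripleIntegral x₀ y₀ (fun η τ => R η τ * U η τ) x y)
    (hX : x₀ ≤ X) (hY : y₀ ≤ Y) :
    tripleIntegral x₀ y₀ (fun η τ => R η τ * U η τ) X Y ≤
      tripleIntegral x₀ y₀ (fun η τ => R η τ * P η τ) X Y *
        Real.exp (tripleIntegral x₀ y₀ (fun η τ => R η τ * Q η τ) X Y) := by
  have hext : ∀ {F : ℝ → ℝ → ℝ}, (∀ x y, x₀ ≤ x → y₀ ≤ y → 0 ≤ F x y) →
      ∀ x y, x₀ ≤ x → y₀ ≤ y → 0 ≤ quadrantExtend x₀ y₀ F x y :=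
    fun hF x y _ _ => hF _ _ (le_max_right x x₀) (le_max_right y y₀)
  have := tripleIntegral_le_mul_exp_of_continuous (continuous_quadrantExtend hP)
    (continuous_quadrantExtend hQ) (continuous_quadrantExtend hR) (continuous_quadrantExtend hU)
    (hext hP₀) (hext hQ₀) (hext hR₀) (hext hU₀) (fun x y hx hy => ?_) hX hY
  · rwa [← tripleIntegral_quadrantExtend (f := fun η τ => R η τ * U η τ) hX hY,
      ← tripleIntegral_quadrantExtend (f := fun η τ => R η τ * P η τ) hX hY,
      ← tripleIntegral_quadrantExtend (f := fun η τ => R η τ * Q η τ) hX hY]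
  · rw [quadrantExtend_of_le hx hy, quadrantExtend_of_le hx hy, quadrantExtend_of_le hx hy]
    calc U x y ≤ P x y + Q x y * tripleIntegral x₀ y₀ (fun η τ => R η τ * U η τ) x y :=
          h x y hx hy
      _ = _ := by rw [← tripleIntegral_quadrantExtend hx hy]; rfl

section IntegralEquation

variable {x₀ y₀ X Y : ℝ} {K : ℝ → ℝ → ℝ → ℝ → ℝ → ℝ}

theorem continuousOn_kernel_comp (hK : ContinuousOn
      (fun z : ℝ × ℝ × ℝ × ℝ × ℝ => K z.1 z.2.1 z.2.2.1 z.2.2.2.1 z.2.2.2.2)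
      (Ici x₀ ×ˢ Ici y₀ ×ˢ Ici x₀ ×ˢ Ici y₀ ×ˢ (univ : Set ℝ)))
    (hX : x₀ ≤ X) (hY : y₀ ≤ Y) {w : ℝ → ℝ → ℝ}
    (hw : ContinuousOn (uncurry w) (Ici x₀ ×ˢ Ici y₀)) :
    ContinuousOn (uncurry fun η τ => K X Y η τ (w η τ)) (Ici x₀ ×ˢ Ici y₀) :=
  hK.comp (continuousOn_const.prodMk (continuousOn_const.prodMk
    (continuousOn_fst.prodMk (continuousOn_snd.prodMk hw))))
    fun _ hz => ⟨hX, hY, hz.1, hz.2, mem_univ _⟩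

theorem abs_le_add_mul_tripleIntegral_of_eq {g p q r u : ℝ → ℝ → ℝ} (hK : ContinuousOn
      (fun z : ℝ × ℝ × ℝ × ℝ × ℝ => K z.1 z.2.1 z.2.2.1 z.2.2.2.1 z.2.2.2.2)
      (Ici x₀ ×ˢ Ici y₀ ×ˢ Ici x₀ ×ˢ Ici y₀ ×ˢ (univ : Set ℝ)))
    (hr : ContinuousOn (uncurry r) (Ici x₀ ×ˢ Ici y₀))
    (hu : ContinuousOn (uncurry u) (Ici x₀ ×ˢ Ici y₀))
    (hK_lip : ∀ η τ, x₀ ≤ η → y₀ ≤ τ → ∀ a b : ℝ,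
      |K X Y η τ a - K X Y η τ b| ≤ q X Y * r η τ * |a - b|)
    (hgK : |g X Y + tripleIntegral x₀ y₀ (fun η τ => K X Y η τ 0) X Y| ≤ p X Y)
    (hu_eq : u X Y = g X Y + tripleIntegral x₀ y₀ (fun η τ => K X Y η τ (u η τ)) X Y)
    (hX : x₀ ≤ X) (hY : y₀ ≤ Y) :
    |u X Y| ≤ p X Y + q X Y * tripleIntegral x₀ y₀ (fun η τ => r η τ * |u η τ|) X Y := by
  set I := tripleIntegral x₀ y₀ (fun η τ => K X Y η τ (u η τ)) X Y
  set I₀ := tripleIntegral x₀ y₀ (fun η τ => K X Y η τ 0) X Y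
  have hdiff : |I - I₀| ≤ q X Y * tripleIntegral x₀ y₀ (fun η τ => r η τ * |u η τ|) X Y := by
    rw [← tripleIntegral_const_mul]
    refine abs_tripleIntegral_sub_le (continuousOn_kernel_comp hK hX hY hu)
      (continuousOn_kernel_comp hK hX hY (w := fun _ _ => 0) continuousOn_const)
      (continuousOn_const.mul (hr.mul (continuous_abs.comp_continuousOn hu))) hX hY
      fun η τ hη hτ => ?_
    simpa only [sub_zero, mul_assoc] using hK_lip η τ hη hτ (u η τ) 0
  calc |u X Y| = |(g X Y + I₀) + (I - I₀)| := by rw [hu_eq]; ring_nf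
    _ ≤ |g X Y + I₀| + |I - I₀| := abs_add_le _ _
    _ ≤ _ := add_le_add hgK hdiff

end IntegralEquation

theorem stmt_8_general (x₀ y₀ : ℝ) (g : ℝ → ℝ → ℝ) (K : ℝ → ℝ → ℝ → ℝ → ℝ → ℝ)
    (p q r : ℝ → ℝ → ℝ) (u : ℝ → ℝ → ℝ)
    (hK_cont : ContinuousOn
      (fun z : ℝ × ℝ × ℝ × ℝ × ℝ => K z.1 z.2.1 z.2.2.1 z.2.2.2.1 z.2.2.2.2)
      (Set.Ici x₀ ×ˢ Set.Ici y₀ ×ˢ Set.Ici x₀ ×ˢ Set.Ici y₀ ×ˢ (Set.univ : Set ℝ)))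
    (hp_cont : ContinuousOn (fun z : ℝ × ℝ => p z.1 z.2) (Set.Ici x₀ ×ˢ Set.Ici y₀))
    (hq_cont : ContinuousOn (fun z : ℝ × ℝ => q z.1 z.2) (Set.Ici x₀ ×ˢ Set.Ici y₀))
    (hr_cont : ContinuousOn (fun z : ℝ × ℝ => r z.1 z.2) (Set.Ici x₀ ×ˢ Set.Ici y₀))
    (hp_nonneg : ∀ x y, x₀ ≤ x → y₀ ≤ y → 0 ≤ p x y)
    (hq_nonneg : ∀ x y, x₀ ≤ x → y₀ ≤ y → 0 ≤ q x y)
    (hr_nonneg : ∀ x y, x₀ ≤ x → y₀ ≤ y → 0 ≤ r x y)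
    (hK_lip : ∀ x y η τ, x₀ ≤ x → y₀ ≤ y → x₀ ≤ η → y₀ ≤ τ → ∀ a b : ℝ,
      |K x y η τ a - K x y η τ b| ≤ q x y * r η τ * |a - b|)
    (hgK_bound : ∀ x y, x₀ ≤ x → y₀ ≤ y →
      |g x y + ∫ s in x₀..x, ∫ η in x₀..s, ∫ τ in y₀..y, K x y η τ 0| ≤ p x y)
    (hu_cont : ContinuousOn (fun z : ℝ × ℝ => u z.1 z.2) (Set.Ici x₀ ×ˢ Set.Ici y₀))
    (hu_sol : ∀ x y, x₀ ≤ x → y₀ ≤ y →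
      u x y = g x y + ∫ s in x₀..x, ∫ η in x₀..s, ∫ τ in y₀..y, K x y η τ (u η τ)) :
    ∀ x y, x₀ ≤ x → y₀ ≤ y →
      |u x y| ≤ p x y + q x y *
        (∫ s in x₀..x, ∫ η in x₀..s, ∫ τ in y₀..y, r η τ * p η τ) *
        Real.exp (∫ s in x₀..x, ∫ η in x₀..s, ∫ τ in y₀..y, r η τ * q η τ) := by
  have hmain : ∀ x y, x₀ ≤ x → y₀ ≤ y →
      |u x y| ≤ p x y + q x y * tripleIntegral x₀ y₀ (fun η τ => r η τ * |u η τ|) x y :=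
    fun x y hx hy => abs_le_add_mul_tripleIntegral_of_eq hK_cont hr_cont hu_cont
      (fun η τ hη hτ => hK_lip x y η τ hx hy hη hτ) (hgK_bound x y hx hy) (hu_sol x y hx hy)
      hx hy
  intro x y hx hy
  calc |u x y| ≤ p x y + q x y * tripleIntegral x₀ y₀ (fun η τ => r η τ * |u η τ|) x y :=
        hmain x y hx hy
    _ ≤ p x y + q x y * (tripleIntegral x₀ y₀ (fun η τ => r η τ * p η τ) x y *
          Real.exp (tripleIntegral x₀ y₀ (fun η τ => r η τ * q η τ) x y)) := by
        gcongr
        · exact hq_nonneg x y hx hy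
        · exact tripleIntegral_le_mul_exp hp_cont hq_cont hr_cont
            (continuous_abs.comp_continuousOn hu_cont) hp_nonneg hq_nonneg hr_nonneg
            (fun _ _ _ _ => abs_nonneg _) hmain hx hy
    _ = _ := by rw [← mul_assoc]; rfl

/-- Continuous (𝕋₁ = 𝕋₂ = ℝ) case of Theorem 3.1: an explicit bound on
solutions of the integral equation
u(x,y) = g(x,y) + ∫∫∫ K(x,y,η,τ,u(η,τ)). -/
theorem stmt_8 (x₀ y₀ : ℝ) (g : ℝ → ℝ → ℝ) (K : ℝ → ℝ → ℝ → ℝ → ℝ → ℝ)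
    (p q r : ℝ → ℝ → ℝ) (u : ℝ → ℝ → ℝ)
    (hg_cont : ContinuousOn (fun z : ℝ × ℝ => g z.1 z.2) (Set.Ici x₀ ×ˢ Set.Ici y₀))
    (hK_cont : ContinuousOn
      (fun z : ℝ × ℝ × ℝ × ℝ × ℝ => K z.1 z.2.1 z.2.2.1 z.2.2.2.1 z.2.2.2.2)
      (Set.Ici x₀ ×ˢ Set.Ici y₀ ×ˢ Set.Ici x₀ ×ˢ Set.Ici y₀ ×ˢ (Set.univ : Set ℝ)))
    (hp_cont : ContinuousOn (fun z : ℝ × ℝ => p z.1 z.2) (Set.Ici x₀ ×ˢ Set.Ici y₀))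
    (hq_cont : ContinuousOn (fun z : ℝ × ℝ => q z.1 z.2) (Set.Ici x₀ ×ˢ Set.Ici y₀))
    (hr_cont : ContinuousOn (fun z : ℝ × ℝ => r z.1 z.2) (Set.Ici x₀ ×ˢ Set.Ici y₀))
    (hp_nonneg : ∀ x y, x₀ ≤ x → y₀ ≤ y → 0 ≤ p x y)
    (hq_nonneg : ∀ x y, x₀ ≤ x → y₀ ≤ y → 0 ≤ q x y)
    (hr_nonneg : ∀ x y, x₀ ≤ x → y₀ ≤ y → 0 ≤ r x y)
    (hK_lip : ∀ x y η τ, x₀ ≤ x → y₀ ≤ y → x₀ ≤ η → y₀ ≤ τ → ∀ a b : ℝ,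
      |K x y η τ a - K x y η τ b| ≤ q x y * r η τ * |a - b|)
    (hgK_bound : ∀ x y, x₀ ≤ x → y₀ ≤ y →
      |g x y + ∫ s in x₀..x, ∫ η in x₀..s, ∫ τ in y₀..y, K x y η τ 0| ≤ p x y)
    (hu_cont : ContinuousOn (fun z : ℝ × ℝ => u z.1 z.2) (Set.Ici x₀ ×ˢ Set.Ici y₀))
    (hu_sol : ∀ x y, x₀ ≤ x → y₀ ≤ y →
      u x y = g x y + ∫ s in x₀..x, ∫ η in x₀..s, ∫ τ in y₀..y, K x y η τ (u η τ)) :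
    ∀ x y, x₀ ≤ x → y₀ ≤ y →
      |u x y| ≤ p x y + q x y *
        (∫ s in x₀..x, ∫ η in x₀..s, ∫ τ in y₀..y, r η τ * p η τ) *
        Real.exp (∫ s in x₀..x, ∫ η in x₀..s, ∫ τ in y₀..y, r η τ * q η τ) :=
  stmt_8_general x₀ y₀ g K p q r u hK_cont hp_cont hq_cont hr_cont hp_nonneg hq_nonneg hr_nonneg
    hK_lip hgK_bound hu_cont hu_sol
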